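/- arXiv:2106.04629 — 3 statements merged into one kernel-verified Lean document; each statement's English description precedes it below -/
import Mathlib

section
/- Consider three jobs with processing times p1 = (k+3)/3, p2 = k/3, p3 = (k-3)/3 for a real k > 6, assigned to two machines with J1 and J2 on different machines. If J3 is assigned to the machine holding J1, the makespan is at least 2k/3; if J3 is assigned to the machine holding J2, the makespan is at least (2k-3)/3. In both cases the ratio of makespan to k/2 is at least 4/3 - 2/k. -/
/-- p1=(k+3)/3, p2=k/3, p3=(k-3)/3, J1 and J2 on different machines.
If J3 with J1 the makespan ≥ 2k/3; if J3 with J2 the makespan ≥ (2k-3)/3;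
in both cases the ratio to k/2 is ≥ 4/3 - 2/k. -/
theorem stmt1 (k p1 p2 p3 : ℝ) (hk : k > 6)
    (hp1 : p1 = (k + 3) / 3) (hp2 : p2 = k / 3) (hp3 : p3 = (k - 3) / 3) :
    (max (p1 + p3) p2 ≥ 2 * k / 3 ∧ max (p1 + p3) p2 / (k / 2) ≥ 4 / 3 - 2 / k) ∧
    (max p1 (p2 + p3) ≥ (2 * k - 3) / 3 ∧ max p1 (p2 + p3) / (k / 2) ≥ 4 / 3 - 2 / k) := by
  have hk0 : (0:ℝ) < k := by linarith
  subst hp1 hp2 hp3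
  have h1 : max ((k + 3) / 3 + (k - 3) / 3) (k / 3) = 2 * k / 3 := by
    rw [max_eq_left (by linarith)]; ring
  have h2 : max ((k + 3) / 3) (k / 3 + (k - 3) / 3) = (2 * k - 3) / 3 := by
    rw [max_eq_right (by linarith)]; ring
  rw [h1, h2]
  have e1 : 2 * k / 3 / (k / 2) = 4 / 3 := by field_simp; ring
  have e2 : (2 * k - 3) / 3 / (k / 2) = 4 / 3 - 2 / k := by field_simp; ring
  rw [e1, e2]
  have : 2 / k > 0 := by positivity
  refine ⟨⟨le_refl _, by linarith⟩, ⟨le_refl _, le_refl _⟩⟩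
end

section
/- Suppose jobs with sizes p1 > p2 > ... > pn > 0 (n ≥ 3) and total sum S = 12 are scheduled on two machines by the rule: assign Ji to M1 if the current load of M1 plus pi is at most 7, otherwise to M2. If additionally either p1 > 7 or 5 < p1 ≤ 7, then the resulting makespan is at most (7/6) times the optimal makespan max(6, p1). -/
/-! If `p1 > 7` the first job goes to `M2` and all the others, of total `12 - p1 < 5`, fit on `M1`.
If `p1 ≤ 7` it goes to `M1`, whose load then stays in `[p1, 7]`, so `M2` ends with
`12 - M1 ≤ 12 - p1 < 7`. Either way the makespan is at most `max 7 p1 ≤ (7/6) · max 6 p1`. -/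

/-- Final loads of the two machines under algorithm I2DS with threshold (7/12)·Sum = 7:
each job goes to M1 if its load stays at most 7, otherwise to M2. -/
noncomputable def loadsI2DS (ps : List ℝ) : ℝ × ℝ :=
  ps.foldl (fun l p => if l.1 + p ≤ 7 then (l.1 + p, l.2) else (l.1, l.2 + p)) (0, 0)

noncomputable def thresholdStep (T : ℝ) (l : ℝ × ℝ) (p : ℝ) : ℝ × ℝ :=
  if l.1 + p ≤ T then (l.1 + p, l.2) else (l.1, l.2 + p)

namespace thresholdStep

variable {T : ℝ}

theorem of_le {l : ℝ × ℝ} {p : ℝ} (h : l.1 + p ≤ T) : thresholdStep T l p = (l.1 + p, l.2) :=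
  if_pos h

theorem foldl_fst_add_snd (ps : List ℝ) (l : ℝ × ℝ) :
    (ps.foldl (thresholdStep T) l).1 + (ps.foldl (thresholdStep T) l).2 = l.1 + l.2 + ps.sum := by
  induction ps generalizing l with
  | nil => simp
  | cons p ps ih =>
    rw [List.foldl_cons, ih, List.sum_cons]
    unfold thresholdStep
    split_ifs <;> simp only <;> ring

theorem foldl_fst_le (ps : List ℝ) {l : ℝ × ℝ} (hl : l.1 ≤ T) :
    (ps.foldl (thresholdStep T) l).1 ≤ T := by
  induction ps generalizing l with
  | nil => exact hl
  | cons p ps ih =>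
    apply ih
    unfold thresholdStep
    split_ifs with h
    exacts [h, hl]

theorem le_foldl_fst {ps : List ℝ} (hps : ∀ p ∈ ps, 0 ≤ p) (l : ℝ × ℝ) :
    l.1 ≤ (ps.foldl (thresholdStep T) l).1 := by
  induction ps generalizing l with
  | nil => exact le_rfl
  | cons p ps ih =>
    have hp : 0 ≤ p := hps p List.mem_cons_self
    refine le_trans ?_ (ih (fun x hx => hps x (List.mem_cons_of_mem _ hx)) _)
    unfold thresholdStep
    split_ifs <;> simp only [le_add_iff_nonneg_right, hp, le_refl]

theorem foldl_of_sum_le {ps : List ℝ} (hps : ∀ p ∈ ps, 0 ≤ p) {l : ℝ × ℝ}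
    (h : l.1 + ps.sum ≤ T) : ps.foldl (thresholdStep T) l = (l.1 + ps.sum, l.2) := by
  induction ps generalizing l with
  | nil => simp
  | cons p ps ih =>
    have hps' : ∀ x ∈ ps, 0 ≤ x := fun x hx => hps x (List.mem_cons_of_mem _ hx)
    rw [List.sum_cons, ← add_assoc] at h ⊢
    have hfit : l.1 + p ≤ T := by linarith [List.sum_nonneg hps']
    rw [List.foldl_cons, of_le hfit, ih hps' h]

end thresholdStep

theorem loadsI2DS_cons_of_le {p : ℝ} (ps : List ℝ) (hp : p ≤ 7) :
    loadsI2DS (p :: ps) = ps.foldl (thresholdStep 7) (p, 0) := by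
  have hstep : thresholdStep 7 (0, 0) p = (p, 0) := by simp [thresholdStep, hp]
  exact congrArg (ps.foldl _) hstep

theorem loadsI2DS_cons_of_lt {p : ℝ} (ps : List ℝ) (hp : 7 < p) :
    loadsI2DS (p :: ps) = ps.foldl (thresholdStep 7) (0, p) := by
  have hstep : thresholdStep 7 (0, 0) p = (0, p) := by simp [thresholdStep, hp.not_ge]
  exact congrArg (ps.foldl _) hstep

theorem stmt10_general (ps : List ℝ) (hpos : ∀ p ∈ ps, 0 < p) (hsum : ps.sum = 12)
    (hp1 : ps.headI > 7 ∨ (5 < ps.headI ∧ ps.headI ≤ 7)) :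
    max (loadsI2DS ps).1 (loadsI2DS ps).2 ≤ (7 / 6) * max 6 ps.headI := by
  obtain _ | ⟨p1, rest⟩ := ps
  · rw [List.headI_nil, show (default : ℝ) = 0 from rfl] at hp1
    norm_num at hp1
  rw [List.headI_cons] at hp1 ⊢
  have hrest : rest.sum = 12 - p1 := by rw [List.sum_cons] at hsum; linarith
  have hrpos : ∀ p ∈ rest, 0 ≤ p := fun p hp => (hpos p (List.mem_cons_of_mem _ hp)).le
  rcases hp1 with hbig | ⟨hgt, hle⟩
  · rw [loadsI2DS_cons_of_lt rest hbig,
      thresholdStep.foldl_of_sum_le hrpos (by linarith), hrest,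
      max_eq_right (show (6 : ℝ) ≤ p1 by linarith)]
    exact max_le (by linarith) (by linarith)
  · have hM1_le := thresholdStep.foldl_fst_le rest (l := (p1, 0)) hle
    have hM1_ge := thresholdStep.le_foldl_fst (T := 7) hrpos (p1, 0)
    have htotal := thresholdStep.foldl_fst_add_snd (T := 7) rest (p1, 0)
    rw [add_zero, hrest] at htotal
    have h7 : (7 : ℝ) ≤ 7 / 6 * max 6 p1 := by linarith [le_max_left (6 : ℝ) p1]
    rw [loadsI2DS_cons_of_le rest hle]
    exact max_le (by linarith) (by linarith)

/-- strictly decreasing positive jobs (n ≥ 3) summing to 12 and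
either p1 > 7 or 5 < p1 ≤ 7: the makespan of I2DS is at most (7/6)·max(6, p1). -/
theorem stmt10 (ps : List ℝ) (hlen : 3 ≤ ps.length)
    (hsorted : ps.Pairwise (· > ·)) (hpos : ∀ p ∈ ps, 0 < p) (hsum : ps.sum = 12)
    (hp1 : ps.headI > 7 ∨ (5 < ps.headI ∧ ps.headI ≤ 7)) :
    max (loadsI2DS ps).1 (loadsI2DS ps).2 ≤ (7 / 6) * max 6 ps.headI :=
  stmt10_general ps hpos hsum hp1
end

section
/- Suppose n ≥ 2 jobs with sizes summing to S are scheduled on three machines, and p1 > (10/27)·S. Then the sum of the remaining jobs is less than (17/27)·S, and any schedule placing J1 alone on machine M3 while the remaining jobs are split between M1 and M2 with loads at most (10/27)·S each achieves makespan exactly p1, which equals the optimal makespan max(S/3, p1) = p1. -/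
/-- if p1 > (10/27)·S (p1 the largest of jobs with positive total S),
then the remaining jobs sum to less than (17/27)·S, and any schedule putting J1 alone
on M3 and splitting the rest into loads l1, l2 ≤ (10/27)·S has makespan exactly p1,
which equals the optimal makespan max(S/3, p1). -/
theorem stmt17 (p1 S l1 l2 : ℝ) (hS : 0 < S) (hl1 : 0 ≤ l1) (hl2 : 0 ≤ l2)
    (hsplit : l1 + l2 = S - p1) (hbig : p1 > (10 / 27) * S)
    (hb1 : l1 ≤ (10 / 27) * S) (hb2 : l2 ≤ (10 / 27) * S) :
    S - p1 < (17 / 27) * S ∧ max l1 (max l2 p1) = p1 ∧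
    max l1 (max l2 p1) = max (S / 3) p1 := by
  have h1 : l1 ≤ p1 := by linarith
  have h2 : l2 ≤ p1 := by linarith
  have h3 : S / 3 ≤ p1 := by linarith
  refine ⟨by linarith, ?_, ?_⟩ <;>
    simp [max_eq_right, h1, h2, h3, max_eq_right h2, max_eq_right h3]
end
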